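/- arXiv:1302.0569 — 7 statements merged into one kernel-verified Lean document; each statement's English description precedes it below -/
import Mathlib

section
/- Let f be a quadratic form in s variables over GF(q) of rank r, where q = p^e. If r is odd and e is odd, then Σ_{y∈GF(p)^*} Σ_{x∈GF(q)^s} ζ_p^{Tr_{q/p}(y·f(x))} = 0. -/
/-- The fixed primitive `p`-th root of unity `ζ_p = exp(2πi/p)` raised to the power
`t ∈ GF(p)`, i.e. `ζ_p^t = exp(2πi·t/p)`. -/
noncomputable def zetaPow (p : ℕ) (t : ZMod p) : ℂ :=
  Complex.exp (2 * Real.pi * Complex.I * (t.val : ℂ) / p)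

/-!
Diagonalize `f ≅ Σ wᵢ uᵢ²`; the rank hypothesis says exactly `r` weights are nonzero. With
`ψ = ζ_p^{Tr(·)}` a nontrivial additive character of `K` and `η` the quadratic character of `K`,
each one-variable sum satisfies `Σₜ ψ(c w t²) = η(c) Σₜ ψ(w t²)` for `c, w ≠ 0` (both are
Gauss sums), so the inner sum at `y` is `η(y)^r S = η(y) S` with `S` independent of `y`. Since
`[K : 𝔽_p] = e` is odd, `η` restricts to the Legendre symbol on `𝔽_p`, whose values sum to zero.
-/

open Finset QuadraticMap

theorem QuadraticMap.exists_eq_sum_mul {R ι : Type*} [CommRing R] [Fintype ι]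
    (c : ι → ι → R) : ∃ Q : QuadraticMap R (ι → R) R,
      ∀ x, Q x = ∑ i, ∑ j, c i j * x i * x j :=
  ⟨∑ i, ∑ j, c i j • proj i j, fun x ↦ by simp [mul_assoc]⟩

theorem QuadraticMap.IsometryEquiv.card_polar_radical {R M₁ M₂ N : Type*} [CommRing R]
    [AddCommGroup M₁] [AddCommGroup M₂] [AddCommGroup N] [Module R M₁] [Module R M₂] [Module R N]
    {Q₁ : QuadraticMap R M₁ N} {Q₂ : QuadraticMap R M₂ N} (φ : Q₁.IsometryEquiv Q₂) :
    Nat.card {x // ∀ z, polar Q₁ x z = 0} = Nat.card {y // ∀ z, polar Q₂ y z = 0} :=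
  Nat.card_congr <| φ.toLinearEquiv.toEquiv.subtypeEquiv fun _ ↦
    φ.toLinearEquiv.toEquiv.forall_congr fun _ ↦ by simp [polar, ← map_add]

theorem polar_weightedSumSquares_eq_zero_iff {F ι : Type*} [Field F] [Fintype ι] [DecidableEq ι]
    (h2 : (2 : F) ≠ 0) (w : ι → F) (x : ι → F) :
    (∀ z, polar (weightedSumSquares F w) x z = 0) ↔ ∀ i, w i * x i = 0 := by
  have hpolar (z : ι → F) : polar (weightedSumSquares F w) x z = ∑ i, 2 * (w i * x i) * z i := by
    simp only [polar, weightedSumSquares_apply, smul_eq_mul, ← sum_sub_distrib, Pi.add_apply]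
    exact sum_congr rfl fun i _ ↦ by ring
  simp only [hpolar]
  refine ⟨fun h i ↦ ?_, fun h z ↦ by simp [h]⟩
  simpa [Pi.single_apply, h2] using h (Pi.single i 1)

theorem card_forall_mul_eq_zero {F ι : Type*} [Field F] [Fintype F] [DecidableEq F] [Fintype ι]
    (w : ι → F) :
    Nat.card {x : ι → F // ∀ i, w i * x i = 0} = Fintype.card F ^ #{i | w i = 0} := by
  have hcard (i : ι) :
      Nat.card {t : F // w i * t = 0} = if w i = 0 then Fintype.card F else 1 := by
    split_ifs with h <;> simp [h, Nat.card_eq_fintype_card]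
  rw [Nat.card_congr (Equiv.subtypePiEquivPi (p := fun i t ↦ w i * t = 0)), Nat.card_pi]
  simp only [hcard, prod_ite, prod_const, one_pow, mul_one]

theorem card_polar_radical_weightedSumSquares {F ι : Type*} [Field F] [Fintype F] [DecidableEq F]
    [Fintype ι] [DecidableEq ι] (h2 : (2 : F) ≠ 0) (w : ι → F) :
    Nat.card {x // ∀ z, polar (weightedSumSquares F w) x z = 0} =
      Fintype.card F ^ #{i | w i = 0} := by
  simp only [polar_weightedSumSquares_eq_zero_iff h2, card_forall_mul_eq_zero]

theorem card_filter_weight_ne_zero_of_isometryEquiv {F V ι : Type*} [Field F] [Fintype F]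
    [DecidableEq F] [AddCommGroup V] [Module F V] [Fintype ι] [DecidableEq ι] (h2 : (2 : F) ≠ 0)
    {Q : QuadraticForm F V} {w : ι → F} (φ : Q.IsometryEquiv (weightedSumSquares F w)) {k : ℕ}
    (hk : Nat.card {x // ∀ z, polar Q x z = 0} = Fintype.card F ^ k) :
    #{i | w i ≠ 0} = Fintype.card ι - k := by
  have hzero : #{i | w i = 0} = k := by
    rw [φ.card_polar_radical, card_polar_radical_weightedSumSquares h2] at hk
    exact Nat.pow_right_injective Fintype.one_lt_card hk
  rw [← card_univ, ← card_filter_add_card_filter_not (s := univ) (fun i ↦ w i = 0), hzero]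
  simp only [ne_eq, Nat.add_sub_cancel_left]

theorem Nat.pow_div_two_eq_geom_sum_mul {q : ℕ} (hq : Odd q) (n : ℕ) :
    q ^ n / 2 = (∑ i ∈ range n, q ^ i) * (q / 2) := by
  obtain ⟨m, rfl⟩ := hq
  have h := geom_sum_mul_add (2 * m) n
  rw [← h, show (2 * m + 1) / 2 = m by omega, mul_left_comm]
  omega

theorem quadraticChar_algebraMap_of_odd_finrank {F K : Type*} [Field F] [Fintype F]
    [DecidableEq F] [Field K] [Fintype K] [DecidableEq K] [Algebra F K] (hF : ringChar F ≠ 2)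
    (hn : Odd (Module.finrank F K)) (y : F) :
    quadraticChar K (algebraMap F K y) = quadraticChar F y := by
  set n := Module.finrank F K
  have hK : ringChar K ≠ 2 := Algebra.ringChar_eq F K ▸ hF
  -- Euler's criterion in `K`, with `(#F ^ n - 1) / 2 = (1 + #F + ⋯ + #F ^ (n - 1)) · (#F - 1) / 2`
  -- and `y ^ #F = y`.
  have hpow : y ^ (Fintype.card K / 2) = (quadraticChar F y : F) := by
    have hgeom : y ^ (∑ i ∈ range n, Fintype.card F ^ i) = y ^ n := by
      simp [← prod_pow_eq_pow_sum, FiniteField.pow_card_pow]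
    rw [Module.card_eq_pow_finrank (K := F),
      Nat.pow_div_two_eq_geom_sum_mul (Nat.odd_iff.mpr (FiniteField.odd_card_of_char_ne_two hF)),
      pow_mul, hgeom, ← pow_mul, mul_comm, pow_mul, ← quadraticChar_eq_pow_of_char_ne_two' hF]
    rcases quadraticChar_isQuadratic F y with h | h | h <;> simp [h, hn.neg_one_pow, hn.pos.ne']
  apply Int.cast_injOn_of_ringChar_ne_two hK (quadraticChar_isQuadratic K _)
    (quadraticChar_isQuadratic F y)
  rw [quadraticChar_eq_pow_of_char_ne_two' hK, ← map_pow, hpow, map_intCast]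

theorem AddChar.compAddMonoidHom_ne_one {A B M : Type*} [AddMonoid A] [AddMonoid B] [Monoid M]
    {ψ : AddChar B M} (hψ : ψ ≠ 1) {f : A →+ B} (hf : Function.Surjective f) :
    ψ.compAddMonoidHom f ≠ 1 := by
  obtain ⟨b, hb⟩ := AddChar.ne_one_iff.mp hψ
  obtain ⟨a, rfl⟩ := hf b
  exact AddChar.ne_one_iff.mpr ⟨a, hb⟩

theorem AddChar.map_sum_eq_prod {A M ι : Type*} [AddCommMonoid A] [CommMonoid M]
    (ψ : AddChar A M) (s : Finset ι) (g : ι → A) : ψ (∑ i ∈ s, g i) = ∏ i ∈ s, ψ (g i) := by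
  induction s using Finset.cons_induction with
  | empty => simp
  | cons i s hi ih => rw [sum_cons, prod_cons, AddChar.map_add_eq_mul, ih]

theorem sum_addChar_mul_weightedSumSquares {F R ι : Type*} [CommRing F] [Fintype F]
    [CommSemiring R] [Fintype ι] [DecidableEq ι] (ψ : AddChar F R) (w : ι → F) (c : F) :
    ∑ x : ι → F, ψ (c * weightedSumSquares F w x) = ∏ i, ∑ t, ψ (c * w i * t ^ 2) := by
  simp only [weightedSumSquares_apply, smul_eq_mul, mul_sum, AddChar.map_sum_eq_prod,
    Fintype.prod_sum]
  simp [pow_two, mul_assoc]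

section QuadraticGaussSum

variable {F R : Type*} [Field F] [Fintype F] [DecidableEq F] [CommRing R] [IsDomain R]
  {ψ : AddChar F R}

theorem sum_addChar_mul_sq (hF : ringChar F ≠ 2) (hψ : ψ ≠ 1) {b : F} (hb : b ≠ 0) :
    ∑ t, ψ (b * t ^ 2) =
      quadraticChar F b * gaussSum ((quadraticChar F).ringHomComp (Int.castRingHom R)) ψ := by
  set χ := (quadraticChar F).ringHomComp (Int.castRingHom R)
  have hsqrts (u : F) : (#{t | t ^ 2 = u} : R) = χ u + 1 := by
    simpa [χ, Set.toFinset_ofPred] using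
      congrArg (Int.cast (R := R)) (quadraticChar_card_sqrts hF u)
  calc ∑ t, ψ (b * t ^ 2)
      = ∑ u, (#{t | t ^ 2 = u} : R) * ψ (b * u) := by
        rw [← sum_fiberwise' univ (fun t : F ↦ t ^ 2) (fun u ↦ ψ (b * u))]
        simp
    _ = gaussSum χ (ψ.mulShift b) + ∑ u, ψ.mulShift b u := by
        simp [hsqrts, add_mul, sum_add_distrib, gaussSum, AddChar.mulShift_apply]
    _ = χ b * gaussSum χ ψ := by
        rw [AddChar.sum_eq_zero_of_ne_one ((AddChar.IsPrimitive.of_ne_one hψ) hb), add_zero,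
          ← Units.val_mk0 hb, gaussSum_mulShift_eq, (quadraticChar_isQuadratic F).comp _ |>.inv]

theorem sum_addChar_mul_mul_sq (hF : ringChar F ≠ 2) (hψ : ψ ≠ 1) {c : F} (hc : c ≠ 0) (a : F) :
    ∑ t, ψ (c * a * t ^ 2) =
      (quadraticChar F c : R) ^ (if a ≠ 0 then 1 else 0) * ∑ t, ψ (a * t ^ 2) := by
  by_cases ha : a = 0
  · simp [ha]
  · rw [sum_addChar_mul_sq hF hψ (mul_ne_zero hc ha), sum_addChar_mul_sq hF hψ ha, map_mul]
    simp [ha, mul_assoc]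

theorem sum_addChar_mul_weightedSumSquares_eq_pow_mul (hF : ringChar F ≠ 2) (hψ : ψ ≠ 1)
    {ι : Type*} [Fintype ι] [DecidableEq ι] (w : ι → F) {c : F} (hc : c ≠ 0) :
    ∑ x : ι → F, ψ (c * weightedSumSquares F w x) =
      (quadraticChar F c : R) ^ #{i | w i ≠ 0} * ∑ x : ι → F, ψ (weightedSumSquares F w x) := by
  have h1 := sum_addChar_mul_weightedSumSquares ψ w 1
  simp only [one_mul] at h1
  rw [sum_addChar_mul_weightedSumSquares, h1, card_filter, ← prod_pow_eq_pow_sum,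
    ← prod_mul_distrib]
  exact prod_congr rfl fun i _ ↦ sum_addChar_mul_mul_sq hF hψ hc (w i)

theorem sum_addChar_mul_eq_pow_mul_of_isometryEquiv (hF : ringChar F ≠ 2) (hψ : ψ ≠ 1)
    {V ι : Type*} [AddCommGroup V] [Module F V] [Fintype V] [Fintype ι] [DecidableEq ι]
    {Q : QuadraticForm F V} {w : ι → F} (φ : Q.IsometryEquiv (weightedSumSquares F w))
    {c : F} (hc : c ≠ 0) :
    ∑ x, ψ (c * Q x) = (quadraticChar F c : R) ^ #{i | w i ≠ 0} * ∑ x, ψ (Q x) := by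
  have transport (g : F → R) : ∑ x, g (Q x) = ∑ u, g (weightedSumSquares F w u) :=
    Fintype.sum_equiv φ.toLinearEquiv.toEquiv _ _ fun x ↦ by simp [φ.map_app]
  rw [transport (fun t ↦ ψ (c * t)), transport ψ]
  exact sum_addChar_mul_weightedSumSquares_eq_pow_mul hF hψ w hc

theorem sum_sum_addChar_algebraMap_mul_eq_zero {K V ι : Type*} [Field K] [Fintype K]
    [DecidableEq K] [Algebra F K] [AddCommGroup V] [Module K V] [Fintype V] [Fintype ι]
    [DecidableEq ι] (hF : ringChar F ≠ 2) (hn : Odd (Module.finrank F K)) {ψ : AddChar K R}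
    (hψ : ψ ≠ 1) {Q : QuadraticForm K V} {w : ι → K}
    (φ : Q.IsometryEquiv (weightedSumSquares K w)) (hw : Odd #{i | w i ≠ 0}) :
    ∑ y ∈ univ \ {0}, ∑ x, ψ (algebraMap F K y * Q x) = 0 := by
  have hK : ringChar K ≠ 2 := Algebra.ringChar_eq F K ▸ hF
  calc _ = ∑ y ∈ univ \ {0}, (quadraticChar F y : R) * ∑ x, ψ (Q x) := by
        refine sum_congr rfl fun y hy ↦ ?_
        have hy0 : algebraMap F K y ≠ 0 := by simpa using hy
        rw [sum_addChar_mul_eq_pow_mul_of_isometryEquiv hK hψ φ hy0,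
          quadraticChar_algebraMap_of_odd_finrank hF hn, ← Int.cast_pow,
          ← MulChar.pow_apply' _ hw.pos.ne', (quadraticChar_isQuadratic F).pow_odd hw]
    _ = 0 := by
        rw [← sum_mul, sdiff_singleton_eq_erase, sum_erase _ (by simp), ← Int.cast_sum,
          quadraticChar_sum_zero hF, Int.cast_zero, zero_mul]

end QuadraticGaussSum

lemma zetaPow_eq_stdAddChar (p : ℕ) [NeZero p] (t : ZMod p) :
    zetaPow p t = ZMod.stdAddChar t := by
  rw [ZMod.stdAddChar_apply, ZMod.toCircle_apply, zetaPow]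

theorem stmt_3_general (p e s r : ℕ) [Fact p.Prime] (hodd : Odd p)
    (K : Type*) [Field K] [Fintype K] [Algebra (ZMod p) K]
    (hK : Fintype.card K = p ^ e)
    (f : (Fin s → K) → K)
    (hquad : ∃ a : Fin s → Fin s → K, ∀ x : Fin s → K,
      f x = ∑ i : Fin s, ∑ j : Fin s, if i ≤ j then a i j * x i * x j else 0)
    (hr : r ≤ s)
    (hrank : Nat.card {x : Fin s → K // ∀ z : Fin s → K, f (x + z) - f x - f z = 0}
      = (p ^ e) ^ (s - r))
    (hrodd : Odd r) (heodd : Odd e) :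
    ∑ y ∈ Finset.univ \ {(0 : ZMod p)}, ∑ x : Fin s → K,
      zetaPow p (Algebra.trace (ZMod p) K (algebraMap (ZMod p) K y * f x)) = 0 := by
  classical
  obtain ⟨a, ha⟩ := hquad
  have hp2 : ringChar (ZMod p) ≠ 2 := by
    rw [ZMod.ringChar_zmod_n]
    exact hodd.ne_two_of_dvd_nat dvd_rfl
  have hK2 : ringChar K ≠ 2 := Algebra.ringChar_eq (ZMod p) K ▸ hp2
  have : Invertible (2 : K) := invertibleOfNonzero (Ring.two_ne_zero hK2)
  obtain ⟨Q, hQ⟩ := exists_eq_sum_mul fun i j : Fin s ↦ if i ≤ j then a i j else 0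
  obtain rfl : f = Q := funext fun x ↦ by simp [ha, hQ, ite_mul]
  obtain ⟨w, ⟨φ⟩⟩ := QuadraticForm.equivalent_weightedSumSquares Q
  have hw : #{i | w i ≠ 0} = r := by
    rw [card_filter_weight_ne_zero_of_isometryEquiv (Ring.two_ne_zero hK2) φ (hK ▸ hrank),
      Fintype.card_fin, Module.finrank_fin_fun]
    omega
  have hdeg : Module.finrank (ZMod p) K = e := by
    have hcard := Module.card_eq_pow_finrank (K := ZMod p) (V := K)
    rw [hK, ZMod.card] at hcard
    exact Nat.pow_right_injective (Fact.out : p.Prime).two_le hcard.symm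
  have hψ : ZMod.stdAddChar.compAddMonoidHom (Algebra.trace (ZMod p) K).toAddMonoidHom ≠ 1 :=
    AddChar.compAddMonoidHom_ne_one (by simpa using ZMod.isPrimitive_stdAddChar p one_ne_zero)
      (Algebra.trace_surjective _ _)
  simpa [zetaPow_eq_stdAddChar] using
    sum_sum_addChar_algebraMap_mul_eq_zero hp2 (hdeg ▸ heodd) hψ φ (hw ▸ hrodd)

/-- Let `p` be an odd prime, `q = p^e`, and `f` a quadratic form in `s`
variables over `K = GF(q)` of rank `r` (i.e. the set
`V = {x | f(x+z) - f(x) - f(z) = 0 for all z}` has cardinality `q^(s-r)`).  If `r` is odd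
and `e` is odd, then `Σ_{y ∈ GF(p)^*} Σ_{x ∈ GF(q)^s} ζ_p^{Tr_{q/p}(y·f(x))} = 0`. -/
theorem stmt_3 (p e s r : ℕ) [Fact p.Prime] (hodd : Odd p)
    (he : 0 < e) (hs : 0 < s)
    (K : Type*) [Field K] [Fintype K] [Algebra (ZMod p) K]
    (hK : Fintype.card K = p ^ e)
    (f : (Fin s → K) → K)
    (hquad : ∃ a : Fin s → Fin s → K, ∀ x : Fin s → K,
      f x = ∑ i : Fin s, ∑ j : Fin s, if i ≤ j then a i j * x i * x j else 0)
    (hr : r ≤ s)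
    (hrank : Nat.card {x : Fin s → K // ∀ z : Fin s → K, f (x + z) - f x - f z = 0}
      = (p ^ e) ^ (s - r))
    (hrodd : Odd r) (heodd : Odd e) :
    ∑ y ∈ Finset.univ \ {(0 : ZMod p)}, ∑ x : Fin s → K,
      zetaPow p (Algebra.trace (ZMod p) K (algebraMap (ZMod p) K y * f x)) = 0 :=
  stmt_3_general p e s r hodd K hK f hquad hr hrank hrodd heodd
end

section
/- For any (a,b) ∈ GF(p^m)² with (a,b) ≠ (0,0), the GF(q)-subspace V_{a,b} = {x ∈ GF(p^m) : Q_{a,b}(x+z) − Q_{a,b}(x) − Q_{a,b}(z) = 0 for all z ∈ GF(p^m)} has cardinality 1, q, or q²; equivalently, the quadratic form Q_{a,b} over GF(q) has rank s, s−1, or s−2. -/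
/-!
Write `σ x = x ^ p ^ k`; since `e ∣ k`, `σ` is a `GF(q)`-algebra automorphism of `GF(p^m)`.
Moving `σ` across the trace, the polar form of `Q_{a,b}` is `Tr(z·(2ax + b·σx + σ⁻¹(bx)))`,
so by nondegeneracy of the trace form the radical is the kernel of the `GF(q)`-linear map
`L = σ(b)·σ² + σ(2a)·σ + b`. If `w ≠ 0` lies in this kernel, then `L ∘ (w·) = L₁ ∘ (σ - 1)` for
an operator `L₁ = c·σ + d` with `c ≠ 0`, whose nonzero solutions are proportional over the fixed
points of `σ`; hence `|ker L| ≤ |Fix σ|²`. A fixed point satisfies `y ^ p ^ k = y = y ^ p ^ m`,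
hence `y ^ q = y`, so `|Fix σ| ≤ q`. Being a `GF(q)`-space with at most `q²` elements, the
radical has `1`, `q` or `q²` elements.
-/

/-- The quadratic form `Q_{a,b}(x) = Tr_{p^m/q}(a·x² + b·x^{p^k+1})` from `F = GF(p^m)`
to `K = GF(q)`. -/
noncomputable def Qab {K F : Type*} [Field K] [Field F] [Algebra K F]
    (p k : ℕ) (a b x : F) : K :=
  Algebra.trace K F (a * x ^ 2 + b * x ^ (p ^ k + 1))

open LinearMap

theorem LinearMap.card_ker_comp_le {R M N P : Type*} [Ring R] [AddCommGroup M] [AddCommGroup N]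
    [AddCommGroup P] [Module R M] [Module R N] [Module R P] [Finite N]
    (f : N →ₗ[R] P) (g : M →ₗ[R] N) :
    Nat.card (ker (f ∘ₗ g)) ≤ Nat.card (ker f) * Nat.card (ker g) := by
  let g' : ker (f ∘ₗ g) →ₗ[R] ker f := g.restrict fun _ hx => hx
  have mem_ker_g' (x : ker (f ∘ₗ g)) : x ∈ ker g' ↔ g x = 0 := by
    rw [mem_ker, ← Subtype.coe_inj]; rfl
  have hker : ker g' ≃ ker g :=
    { toFun x := ⟨x.1.1, (mem_ker_g' x.1).mp x.2⟩
      invFun y := ⟨⟨y.1, by simp [mem_ker.mp y.2]⟩, (mem_ker_g' _).mpr (mem_ker.mp y.2)⟩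
      left_inv _ := rfl
      right_inv _ := rfl }
  calc Nat.card (ker (f ∘ₗ g)) = Nat.card (ker g') * Nat.card (range g') := by
        rw [Submodule.card_eq_card_quotient_mul_card (ker g'),
          Nat.card_congr g'.quotKerEquivRange.toEquiv]
    _ ≤ Nat.card (ker g) * Nat.card (ker f) := by
        rw [Nat.card_congr hker]
        gcongr
        exact Nat.card_le_card_of_injective _ (range g').injective_subtype
    _ = Nat.card (ker f) * Nat.card (ker g) := mul_comm _ _

section LinearizedQuadratic

variable {K F : Type*} [Field K] [Field F] [Algebra K F] (σ : F →ₐ[K] F)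

def linearizedQuadratic (c₂ c₁ c₀ : F) : F →ₗ[K] F :=
  mulLeft K c₂ ∘ₗ σ.toLinearMap ∘ₗ σ.toLinearMap + mulLeft K c₁ ∘ₗ σ.toLinearMap + mulLeft K c₀

@[simp]
theorem linearizedQuadratic_apply (c₂ c₁ c₀ x : F) :
    linearizedQuadratic σ c₂ c₁ c₀ x = c₂ * σ (σ x) + c₁ * σ x + c₀ * x :=
  rfl

theorem linearizedQuadratic_comp_mulLeft {c₂ c₁ c₀ w : F}
    (hw : linearizedQuadratic σ c₂ c₁ c₀ w = 0) :
    linearizedQuadratic σ c₂ c₁ c₀ ∘ₗ mulLeft K w =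
      linearizedQuadratic σ 0 (c₂ * σ (σ w)) (c₂ * σ (σ w) + c₁ * σ w) ∘ₗ
        (σ.toLinearMap - LinearMap.id) := by
  ext y
  rw [linearizedQuadratic_apply] at hw
  simp only [comp_apply, linearizedQuadratic_apply, mulLeft_apply, map_mul, LinearMap.sub_apply,
    map_sub, AlgHom.toLinearMap_apply, id_apply]
  linear_combination y * hw

variable [Finite F]

theorem card_ker_linearizedQuadratic_zero_le {c₁ : F} (hc₁ : c₁ ≠ 0) (c₀ : F) :
    Nat.card (ker (linearizedQuadratic σ 0 c₁ c₀)) ≤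
      Nat.card (ker (σ.toLinearMap - LinearMap.id)) := by
  rcases eq_or_ne (ker (linearizedQuadratic σ 0 c₁ c₀)) ⊥ with hbot | hne
  · rw [hbot, Nat.card_unique]
    exact Nat.card_pos
  obtain ⟨w, hw, hw0⟩ := Submodule.ne_bot_iff _ |>.mp hne
  have hσw : σ w ≠ 0 := (map_ne_zero σ).mpr hw0
  have hfixed (x : F) (hx : x ∈ ker (linearizedQuadratic σ 0 c₁ c₀)) :
      x / w ∈ ker (σ.toLinearMap - LinearMap.id) := by
    simp only [mem_ker, linearizedQuadratic_apply, zero_mul, zero_add] at hx hw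
    have hcross : σ x * w = x * σ w := by
      apply mul_left_cancel₀ hc₁
      linear_combination w * hx - x * hw
    rw [mem_ker, LinearMap.sub_apply, AlgHom.toLinearMap_apply, id_apply, sub_eq_zero, map_div₀,
      div_eq_div_iff hσw hw0, hcross]
  exact Nat.card_le_card_of_injective (fun x => ⟨x / w, hfixed x x.2⟩) fun x y hxy =>
    Subtype.ext ((div_left_inj' hw0).mp (congrArg Subtype.val hxy))

theorem card_ker_linearizedQuadratic_le {c₂ c₁ : F} (h : c₂ ≠ 0 ∨ c₁ ≠ 0) (c₀ : F) :
    Nat.card (ker (linearizedQuadratic σ c₂ c₁ c₀)) ≤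
      Nat.card (ker (σ.toLinearMap - LinearMap.id)) ^ 2 := by
  rcases eq_or_ne c₂ 0 with rfl | hc₂
  · exact (card_ker_linearizedQuadratic_zero_le σ (h.resolve_left (not_not.mpr rfl)) c₀).trans
      (Nat.le_self_pow two_ne_zero _)
  rcases eq_or_ne (ker (linearizedQuadratic σ c₂ c₁ c₀)) ⊥ with hbot | hne
  · rw [hbot, Nat.card_unique]
    exact Nat.one_le_pow _ _ Nat.card_pos
  obtain ⟨w, hw, hw0⟩ := Submodule.ne_bot_iff _ |>.mp hne
  have hc : c₂ * σ (σ w) ≠ 0 := mul_ne_zero hc₂ ((map_ne_zero σ).mpr ((map_ne_zero σ).mpr hw0))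
  calc Nat.card (ker (linearizedQuadratic σ c₂ c₁ c₀))
      = Nat.card (ker (linearizedQuadratic σ c₂ c₁ c₀ ∘ₗ mulLeft K w)) :=
        Nat.card_congr ((Equiv.mulLeft₀ w hw0).subtypeEquiv fun y => by simp).symm
    _ = Nat.card (ker (linearizedQuadratic σ 0 (c₂ * σ (σ w)) (c₂ * σ (σ w) + c₁ * σ w) ∘ₗ
          (σ.toLinearMap - LinearMap.id))) := by
        rw [linearizedQuadratic_comp_mulLeft σ (mem_ker.mp hw)]
    _ ≤ Nat.card (ker (σ.toLinearMap - LinearMap.id)) ^ 2 := by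
        grw [card_ker_comp_le, card_ker_linearizedQuadratic_zero_le σ hc, sq]

end LinearizedQuadratic

theorem pow_pow_gcd_eq_self {M : Type*} [Monoid M] {p m k : ℕ} {y : M} (hm : y ^ p ^ m = y)
    (hk : y ^ p ^ k = y) : y ^ p ^ m.gcd k = y := by
  have hper (n : ℕ) : Function.IsPeriodicPt (· ^ p) n y ↔ y ^ p ^ n = y := by
    rw [Function.IsPeriodicPt, Function.IsFixedPt, pow_iterate]
  exact (hper _).mp (((hper m).mpr hm).gcd ((hper k).mpr hk))

open Polynomial in
theorem card_pow_eq_self_le {F : Type*} [Field F] {n : ℕ} (hn : 1 < n) :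
    Nat.card {y : F // y ^ n = y} ≤ n := by
  classical
  have hroots (y : F) : y ^ n = y ↔ y ∈ (X ^ n - X : F[X]).roots.toFinset := by
    simp [mem_roots (FiniteField.X_pow_card_sub_X_ne_zero F hn), sub_eq_zero]
  rw [Nat.card_congr (Equiv.subtypeEquivRight hroots), Nat.card_eq_fintype_card,
    Fintype.card_coe]
  calc _ ≤ _ := Multiset.toFinset_card_le _
    _ ≤ _ := card_roots' _
    _ = n := FiniteField.X_pow_card_sub_X_natDegree_eq F hn

section FiniteField

variable {K F : Type*} [Field K] [Field F] [Algebra K F]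

theorem exists_algEquiv_apply_eq_pow [Fintype K] [Finite F] {p e k : ℕ}
    (hK : Fintype.card K = p ^ e) (hek : e ∣ k) : ∃ σ : F ≃ₐ[K] F, ∀ x, σ x = x ^ p ^ k := by
  refine ⟨FiniteField.frobeniusAlgEquivOfAlgebraic K F ^ (k / e), fun x => ?_⟩
  rw [AlgEquiv.coe_pow, FiniteField.coe_frobeniusAlgEquivOfAlgebraic_iterate, hK, ← pow_mul,
    Nat.mul_div_cancel' hek]

theorem card_ker_sub_id_le_pow_gcd [Fintype F] (σ : F →ₐ[K] F) {p m k : ℕ}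
    (hσ : ∀ x, σ x = x ^ p ^ k) (hF : Fintype.card F = p ^ m) (hp : 1 < p ^ m.gcd k) :
    Nat.card (ker (σ.toLinearMap - LinearMap.id)) ≤ p ^ m.gcd k := by
  have hfixed (y : F) (hy : y ∈ ker (σ.toLinearMap - LinearMap.id)) : y ^ p ^ m.gcd k = y := by
    rw [mem_ker, LinearMap.sub_apply, AlgHom.toLinearMap_apply, id_apply, sub_eq_zero, hσ] at hy
    exact pow_pow_gcd_eq_self (hF ▸ FiniteField.pow_card y) hy
  calc Nat.card (ker (σ.toLinearMap - LinearMap.id))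
      ≤ Nat.card {y : F // y ^ p ^ m.gcd k = y} :=
        Nat.card_le_card_of_injective _ (Subtype.impEmbedding _ _ hfixed).injective
    _ ≤ p ^ m.gcd k := card_pow_eq_self_le hp

theorem trace_mul_algEquiv_apply (σ : F ≃ₐ[K] F) (y z : F) :
    Algebra.trace K F (y * σ z) = Algebra.trace K F (σ.symm y * z) := by
  rw [← Algebra.trace_eq_of_algEquiv σ (σ.symm y * z), map_mul σ, σ.apply_symm_apply]

theorem Qab_add_sub_sub {p k : ℕ} (σ : F ≃ₐ[K] F) (hσ : ∀ x, σ x = x ^ p ^ k) (a b x z : F) :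
    Qab (K := K) p k a b (x + z) - Qab p k a b x - Qab p k a b z =
      Algebra.trace K F (z * (2 * a * x + b * σ x + σ.symm (b * x))) := by
  have hpow (y : F) : y ^ (p ^ k + 1) = σ y * y := by rw [pow_succ, hσ]
  calc _ = Algebra.trace K F (z * (2 * a * x + b * σ x) + b * x * σ z) := by
        simp only [Qab, hpow, map_add σ, ← map_sub]
        congr 1
        ring
    _ = _ := by
        rw [mul_add z (2 * a * x + b * σ x), map_add, map_add, mul_comm z (σ.symm (b * x)),
          ← trace_mul_algEquiv_apply]

theorem forall_Qab_add_sub_sub_eq_zero_iff [FiniteDimensional K F] [Algebra.IsSeparable K F]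
    {p k : ℕ} (σ : F ≃ₐ[K] F) (hσ : ∀ x, σ x = x ^ p ^ k) (a b x : F) :
    (∀ z, Qab (K := K) p k a b (x + z) - Qab p k a b x - Qab p k a b z = 0) ↔
      linearizedQuadratic (σ : F →ₐ[K] F) (σ b) (σ (2 * a)) b x = 0 := by
  have hσu : σ (2 * a * x + b * σ x + σ.symm (b * x)) =
      linearizedQuadratic (σ : F →ₐ[K] F) (σ b) (σ (2 * a)) b x := by
    simp only [map_add, map_mul, AlgEquiv.apply_symm_apply, linearizedQuadratic_apply,
      AlgEquiv.coe_toAlgHom]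
    ring
  simp_rw [Qab_add_sub_sub σ hσ, ← hσu, map_eq_zero_iff σ σ.injective]
  refine ⟨fun h => (traceForm_nondegenerate K F).1 _ fun z => ?_, fun h z => ?_⟩
  · rw [Algebra.traceForm_apply, mul_comm]
    exact h z
  · rw [h, mul_zero, map_zero]

end FiniteField

theorem stmt_4_general (p m k e : ℕ) (hodd : Odd p)
    (he : e = Nat.gcd m k)
    (K F : Type*) [Field K] [Fintype K] [Field F] [Fintype F] [Algebra K F]
    (hK : Fintype.card K = p ^ e) (hF : Fintype.card F = p ^ m)
    (a b : F) (hab : (a, b) ≠ (0, 0)) :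
    Nat.card {x : F // ∀ z : F,
        Qab (K := K) p k a b (x + z) - Qab (K := K) p k a b x - Qab (K := K) p k a b z = 0}
      = 1 ∨
    Nat.card {x : F // ∀ z : F,
        Qab (K := K) p k a b (x + z) - Qab (K := K) p k a b x - Qab (K := K) p k a b z = 0}
      = p ^ e ∨
    Nat.card {x : F // ∀ z : F,
        Qab (K := K) p k a b (x + z) - Qab (K := K) p k a b x - Qab (K := K) p k a b z = 0}
      = p ^ (2 * e) := by
  subst he
  obtain ⟨σ, hσ⟩ := exists_algEquiv_apply_eq_pow (F := F) hK (Nat.gcd_dvd_right m k)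
  have hq : 1 < p ^ m.gcd k := hK ▸ Fintype.one_lt_card
  have h2 : (2 : F) ≠ 0 := Ring.two_ne_zero fun h => by
    simpa [hF, Nat.odd_iff.mp hodd.pow] using FiniteField.even_card_iff_char_two.mp h
  have hcoef : σ b ≠ 0 ∨ σ (2 * a) ≠ 0 := by
    by_contra! h
    simp only [map_eq_zero_iff σ σ.injective, mul_eq_zero, h2, false_or] at h
    exact hab (by rw [h.1, h.2])
  set L := linearizedQuadratic (σ : F →ₐ[K] F) (σ b) (σ (2 * a)) b
  have hLcard : Nat.card (ker L) = (p ^ m.gcd k) ^ Module.finrank K (ker L) := by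
    have := Fintype.ofFinite (ker L)
    rw [Nat.card_eq_fintype_card, Module.card_eq_pow_finrank (K := K), hK]
  have hLle : Nat.card (ker L) ≤ (p ^ m.gcd k) ^ 2 :=
    (card_ker_linearizedQuadratic_le _ hcoef b).trans
      (Nat.pow_le_pow_left (card_ker_sub_id_le_pow_gcd (σ : F →ₐ[K] F) hσ hF hq) 2)
  have hd : Module.finrank K (ker L) ≤ 2 := (Nat.pow_le_pow_iff_right hq).mp (hLcard ▸ hLle)
  rw [Nat.card_congr (Equiv.subtypeEquivRight fun x =>
    (forall_Qab_add_sub_sub_eq_zero_iff σ hσ a b x).trans mem_ker.symm), hLcard]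
  interval_cases Module.finrank K (ker L)
  · exact Or.inl (pow_zero _)
  · exact Or.inr (Or.inl (pow_one _))
  · exact Or.inr (Or.inr (pow_mul' p 2 _).symm)

/-- Let `p` be an odd prime, `m, k` positive, `e = gcd(m,k)`, `s = m/e`
odd with `s ≥ 3`, `q = p^e`, `K = GF(q)`, `F = GF(p^m)`.  For `(a,b) ≠ (0,0)`, the
`GF(q)`-subspace `V_{a,b} = {x | Q_{a,b}(x+z) - Q_{a,b}(x) - Q_{a,b}(z) = 0 for all z}`
has cardinality `1`, `q`, or `q²`; i.e. `Q_{a,b}` has rank `s`, `s-1`, or `s-2`. -/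
theorem stmt_4 (p m k e s : ℕ) [Fact p.Prime] (hodd : Odd p)
    (hm : 0 < m) (hk : 0 < k)
    (he : e = Nat.gcd m k) (hs : s = m / e) (hsodd : Odd s) (hs3 : 3 ≤ s)
    (K F : Type*) [Field K] [Fintype K] [Field F] [Fintype F] [Algebra K F]
    (hK : Fintype.card K = p ^ e) (hF : Fintype.card F = p ^ m)
    (a b : F) (hab : (a, b) ≠ (0, 0)) :
    Nat.card {x : F // ∀ z : F,
        Qab (K := K) p k a b (x + z) - Qab (K := K) p k a b x - Qab (K := K) p k a b z = 0}
      = 1 ∨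
    Nat.card {x : F // ∀ z : F,
        Qab (K := K) p k a b (x + z) - Qab (K := K) p k a b x - Qab (K := K) p k a b z = 0}
      = p ^ e ∨
    Nat.card {x : F // ∀ z : F,
        Qab (K := K) p k a b (x + z) - Qab (K := K) p k a b x - Qab (K := K) p k a b z = 0}
      = p ^ (2 * e) :=
  stmt_4_general p m k e hodd he K F hK hF a b hab
end

section
/- Suppose k is even and e is odd. Then for any (a,b) ∈ GF(p^m)² with (a,b) ≠ (0,0), at least one of the quadratic forms Q_{a,b} and Q_{−a,b} has rank s; that is, at least one of the sets V_{a,b} = {x : Q_{a,b}(x+z) − Q_{a,b}(x) − Q_{a,b}(z) = 0 for all z} and V_{−a,b} = {x : Q_{−a,b}(x+z) − Q_{−a,b}(x) − Q_{−a,b}(z) = 0 for all z} equals {0}. -/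
open QuadraticMap (polar)

def polarRadical {M N : Type*} [AddCommGroup M] [AddCommGroup N] (Q : M → N) : Set M :=
  {x | ∀ z, polar Q x z = 0}

theorem apply_mul_cross_eq_neg {R S : Type*} [CommRing R] [FunLike S R R] [RingHomClass S R R]
    (σ : S) {a b x y : R}
    (hx : σ b * σ (σ x) + 2 * σ a * σ x + b * x = 0)
    (hy : σ b * σ (σ y) + 2 * σ (-a) * σ y + b * y = 0) :
    σ (b * (σ x * y + x * σ y)) = -(b * (σ x * y + x * σ y)) := by
  simp only [map_mul, map_add, map_neg] at hy ⊢
  linear_combination σ y * hx + σ x * hy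

section TraceQuadratic

variable {K F : Type*} [Field K] [Field F] [Algebra K F]

theorem Algebra.norm_neg_of_odd_finrank [FiniteDimensional K F]
    (hodd : Odd (Module.finrank K F)) (u : F) :
    Algebra.norm K (-u) = -Algebra.norm K u := by
  rw [neg_eq_neg_one_mul, map_mul, ← map_one (algebraMap K F), ← map_neg,
    Algebra.norm_algebraMap, hodd.neg_one_pow, neg_one_mul]

theorem AlgEquiv.apply_ne_neg [FiniteDimensional K F] (hodd : Odd (Module.finrank K F))
    (h2 : (2 : K) ≠ 0) (σ : F ≃ₐ[K] F) {u : F} (hu : u ≠ 0) : σ u ≠ -u := by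
  intro h
  have hN := congrArg (Algebra.norm K) h
  rw [Algebra.norm_eq_of_algEquiv, Algebra.norm_neg_of_odd_finrank hodd,
    eq_neg_iff_add_eq_zero, ← two_mul] at hN
  exact mul_ne_zero h2 (Algebra.norm_ne_zero_iff.mpr hu) hN

noncomputable def traceQuadratic (σ : F ≃ₐ[K] F) (a b x : F) : K :=
  Algebra.trace K F (a * x ^ 2 + b * (x * σ x))

theorem polar_traceQuadratic (σ : F ≃ₐ[K] F) (a b x z : F) :
    polar (traceQuadratic σ a b) x z =
      Algebra.trace K F ((2 * a * x + b * σ x) * z + b * x * σ z) := by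
  simp only [polar, traceQuadratic, map_add σ]
  rw [← map_sub, ← map_sub]
  congr 1
  ring

theorem zero_mem_polarRadical_traceQuadratic (σ : F ≃ₐ[K] F) (a b : F) :
    0 ∈ polarRadical (traceQuadratic σ a b) := fun z => by
  simp [polar, traceQuadratic]

theorem linearized_eq_zero_of_mem_polarRadical [FiniteDimensional K F]
    [Algebra.IsSeparable K F] (σ : F ≃ₐ[K] F) {a b x : F}
    (hx : x ∈ polarRadical (traceQuadratic σ a b)) :
    σ b * σ (σ x) + 2 * σ a * σ x + b * x = 0 := by
  have hσ : σ (σ.symm (b * x)) = b * x := σ.apply_symm_apply _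
  -- `Tr (b x · σ z) = Tr (σ⁻¹ (b x) · z)`, so `σ⁻¹ (b x)` joins the linear coefficient of `z`
  have hlin : 2 * a * x + b * σ x + σ.symm (b * x) = 0 := by
    refine (traceForm_nondegenerate K F).1 _ fun z => ?_
    rw [Algebra.traceForm_apply, ← hx z, polar_traceQuadratic, add_mul, map_add, map_add,
      ← hσ, ← map_mul, Algebra.trace_eq_of_algEquiv, hσ, mul_comm]
  have := congrArg σ hlin
  simp only [map_add, map_mul, map_ofNat, σ.apply_symm_apply, map_zero] at this
  linear_combination this

theorem polarRadical_traceQuadratic_eq_zero_or [FiniteDimensional K F]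
    [Algebra.IsSeparable K F] (hodd : Odd (Module.finrank K F)) (h2 : (2 : K) ≠ 0)
    (σ : F ≃ₐ[K] F) {a b : F} (hab : (a, b) ≠ (0, 0)) :
    polarRadical (traceQuadratic σ a b) = {0} ∨
      polarRadical (traceQuadratic σ (-a) b) = {0} := by
  simp only [Set.eq_singleton_iff_unique_mem, zero_mem_polarRadical_traceQuadratic, true_and]
  by_contra! ⟨⟨x, hx, hx0⟩, ⟨y, hy, hy0⟩⟩
  have hx' := linearized_eq_zero_of_mem_polarRadical σ hx
  have hy' := linearized_eq_zero_of_mem_polarRadical σ hy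
  by_cases hb : b = 0
  · have ha : a ≠ 0 := fun ha => hab (by rw [ha, hb])
    have h2F : (2 : F) ≠ 0 := by
      rw [← map_ofNat (algebraMap K F) 2]
      exact (map_ne_zero _).mpr h2
    simp [hb, h2F, ha, hx0] at hx'
  by_cases hD : σ x * y + x * σ y = 0
  · refine σ.apply_ne_neg hodd h2 (div_ne_zero hx0 hy0) ?_
    have hσy : σ y ≠ 0 := (map_ne_zero σ).mpr hy0
    rw [map_div₀]
    field_simp
    linear_combination hD
  · exact σ.apply_ne_neg hodd h2 (mul_ne_zero hb hD) (apply_mul_cross_eq_neg σ hx' hy')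

end TraceQuadratic

theorem Qab_eq_traceQuadratic {K F : Type*} [Field K] [Fintype K] [Field F] [Algebra K F]
    [Algebra.IsAlgebraic K F] {p k n : ℕ} (h : p ^ k = Fintype.card K ^ n) (a b : F) :
    Qab (K := K) p k a b =
      traceQuadratic (FiniteField.frobeniusAlgEquivOfAlgebraic K F ^ n) a b := by
  funext x
  simp only [Qab, traceQuadratic, AlgEquiv.coe_pow,
    FiniteField.coe_frobeniusAlgEquivOfAlgebraic_iterate, ← h, pow_succ' x (p ^ k)]

theorem stmt_5_general (p m k e s : ℕ) [Fact p.Prime] (hodd : Odd p)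
    (he : e = Nat.gcd m k) (hs : s = m / e) (hsodd : Odd s)
    (K F : Type*) [Field K] [Fintype K] [Field F] [Fintype F] [Algebra K F]
    (hK : Fintype.card K = p ^ e) (hF : Fintype.card F = p ^ m)
    (a b : F) (hab : (a, b) ≠ (0, 0)) :
    {x : F | ∀ z : F,
        Qab (K := K) p k a b (x + z) - Qab (K := K) p k a b x - Qab (K := K) p k a b z = 0}
      = {0} ∨
    {x : F | ∀ z : F,
        Qab (K := K) p k (-a) b (x + z) - Qab (K := K) p k (-a) b x
          - Qab (K := K) p k (-a) b z = 0}
      = {0} := by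
  have hp : p.Prime := Fact.out
  have he0 : e ≠ 0 := by rintro rfl; simp [hs] at hsodd
  have : CharP K p := charP_of_card_eq_prime_pow hK
  have h2 : (2 : K) ≠ 0 := Ring.two_ne_zero <| by
    rw [ringChar.eq K p]; rintro rfl; exact (by decide : ¬Odd 2) hodd
  have hrank : Module.finrank K F = s := by
    have h := Module.card_eq_pow_finrank (K := K) (V := F)
    rw [hF, hK, ← pow_mul] at h
    rw [hs, Nat.pow_right_injective hp.two_le h,
      Nat.mul_div_cancel_left _ (Nat.pos_of_ne_zero he0)]
  obtain ⟨n, hn⟩ : e ∣ k := he ▸ Nat.gcd_dvd_right m k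
  have hfrob : p ^ k = Fintype.card K ^ n := by rw [hK, hn, pow_mul]
  simpa only [polarRadical, polar, Qab_eq_traceQuadratic hfrob] using
    polarRadical_traceQuadratic_eq_zero_or (hrank ▸ hsodd) h2 _ hab

/-- Let `p` be an odd prime, `m, k` positive, `e = gcd(m,k)`, `s = m/e`
odd with `s ≥ 3`, `q = p^e`, `K = GF(q)`, `F = GF(p^m)`.  Suppose `k` is even and `e` is
odd.  Then for any `(a,b) ≠ (0,0)`, at least one of the quadratic forms `Q_{a,b}` and
`Q_{-a,b}` has rank `s`; that is, at least one of the radicals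
`V_{a,b} = {x | Q_{a,b}(x+z) - Q_{a,b}(x) - Q_{a,b}(z) = 0 for all z}` and `V_{-a,b}`
equals `{0}`. -/
theorem stmt_5 (p m k e s : ℕ) [Fact p.Prime] (hodd : Odd p)
    (hm : 0 < m) (hk : 0 < k)
    (he : e = Nat.gcd m k) (hs : s = m / e) (hsodd : Odd s) (hs3 : 3 ≤ s)
    (hkeven : Even k) (heodd : Odd e)
    (K F : Type*) [Field K] [Fintype K] [Field F] [Fintype F] [Algebra K F]
    (hK : Fintype.card K = p ^ e) (hF : Fintype.card F = p ^ m)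
    (a b : F) (hab : (a, b) ≠ (0, 0)) :
    {x : F | ∀ z : F,
        Qab (K := K) p k a b (x + z) - Qab (K := K) p k a b x - Qab (K := K) p k a b z = 0}
      = {0} ∨
    {x : F | ∀ z : F,
        Qab (K := K) p k (-a) b (x + z) - Qab (K := K) p k (-a) b x
          - Qab (K := K) p k (-a) b z = 0}
      = {0} :=
  stmt_5_general p m k e s hodd he hs hsodd K F hK hF a b hab
end

section
/- Suppose k/e is even and s is odd. Then x^{p^k−1} ≠ −1 for every x ∈ GF(p^m)^*. -/
/-!
Write `e = gcd(m, k)`, `s = m / e` and `N = 1 + p^e + ⋯ + p^(e(s-1))`, so that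
`p^m - 1 = (p^e - 1) N`. Since `p^e - 1 ∣ p^k - 1`, the exponent `(p^k - 1) N` is a multiple of
`p^m - 1`, so `(x^(p^k - 1))^N = 1` for every `x ≠ 0`. But `N` is a sum of `s` odd terms, hence odd,
and `(-1)^N = -1 ≠ 1` in odd characteristic.
-/

open Finset

theorem Nat.sub_one_mul_geom_sum (a n : ℕ) : (a - 1) * ∑ i ∈ range n, a ^ i = a ^ n - 1 := by
  rcases a with _ | a
  · cases n <;> simp
  · rw [Nat.add_sub_cancel, mul_comm, ← geom_sum_mul_add a n, Nat.add_sub_cancel]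

theorem Odd.geom_sum_nat {a n : ℕ} (ha : Odd a) (hn : Odd n) : Odd (∑ i ∈ range n, a ^ i) := by
  rw [odd_sum_iff_odd_card_odd, filter_true_of_mem fun i _ ↦ ha.pow, card_range]
  exact hn

theorem Nat.pow_sub_one_dvd_pow_sub_one_mul_geom_sum (a m k : ℕ) :
    a ^ m - 1 ∣ (a ^ k - 1) * ∑ i ∈ range (m / m.gcd k), (a ^ m.gcd k) ^ i := by
  obtain ⟨c, hc⟩ := Nat.pow_sub_one_dvd_pow_sub_one a (Nat.gcd_dvd_right m k)
  have hm : a ^ m - 1 = (a ^ m.gcd k - 1) * ∑ i ∈ range (m / m.gcd k), (a ^ m.gcd k) ^ i := by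
    rw [Nat.sub_one_mul_geom_sum, ← pow_mul, Nat.mul_div_cancel' (Nat.gcd_dvd_left m k)]
  rw [hc, hm]
  exact ⟨c, by ring⟩

theorem FiniteField.pow_ne_neg_one_of_card_sub_one_dvd_mul_odd {F : Type*} [Field F] [Fintype F]
    (hF : ringChar F ≠ 2) {x : F} (hx : x ≠ 0) {n N : ℕ} (hN : Odd N)
    (hdvd : Fintype.card F - 1 ∣ n * N) : x ^ n ≠ -1 := by
  intro hxn
  obtain ⟨c, hc⟩ := hdvd
  have h : (-1 : F) ^ N = 1 := by
    rw [← hxn, ← pow_mul, hc, pow_mul, FiniteField.pow_card_sub_one_eq_one x hx, one_pow]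
  rw [hN.neg_one_pow] at h
  exact Ring.neg_one_ne_one_of_char_ne_two hF h

theorem FiniteField.ringChar_ne_two_of_odd_card {F : Type*} [Field F] [Fintype F]
    (h : Odd (Fintype.card F)) : ringChar F ≠ 2 := fun h2 ↦
  Nat.not_even_iff_odd.mpr h (Nat.even_iff.mpr (FiniteField.even_card_iff_char_two.mp h2))

theorem stmt_6_general (p m k : ℕ) (hodd : Odd p)
    (hso : Odd (m / Nat.gcd m k))
    (F : Type*) [Field F] [Fintype F] (hF : Fintype.card F = p ^ m) :
    ∀ x : F, x ≠ 0 → x ^ (p ^ k - 1) ≠ -1 := by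
  intro x hx
  have hchar : ringChar F ≠ 2 := FiniteField.ringChar_ne_two_of_odd_card (hF ▸ hodd.pow)
  refine FiniteField.pow_ne_neg_one_of_card_sub_one_dvd_mul_odd hchar hx
    (Odd.geom_sum_nat (hodd.pow (n := m.gcd k)) hso) ?_
  rw [hF]
  exact Nat.pow_sub_one_dvd_pow_sub_one_mul_geom_sum p m k

/-- Let `p` be an odd prime, `m, k` positive integers, `e = gcd(m,k)`,
`s = m/e`.  Suppose `k/e` is even and `s` is odd.  Then `x^(p^k - 1) ≠ -1` for every
nonzero `x ∈ GF(p^m)`. -/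
theorem stmt_6 (p m k : ℕ) [Fact p.Prime] (hodd : Odd p)
    (hm : 0 < m) (hk : 0 < k)
    (hke : Even (k / Nat.gcd m k)) (hso : Odd (m / Nat.gcd m k))
    (F : Type*) [Field F] [Fintype F] (hF : Fintype.card F = p ^ m) :
    ∀ x : F, x ≠ 0 → x ^ (p ^ k - 1) ≠ -1 :=
  stmt_6_general p m k hodd hso F hF
end

section
/- Suppose k is even and e is odd. Then the set S₁ = {(y₁,y₂,x₁,x₂) ∈ GF(p)^* × GF(p)^* × GF(p^m) × GF(p^m) : y₁x₁² − y₂x₂² = 0 and y₁x₁^{p^k+1} − y₂x₂^{p^k+1} = 0} has cardinality (p−1)²·p^m. -/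
/-!
If `x₂ ≠ 0`, the ratio `u = x₁ / x₂` of a solution satisfies `u ^ 2 = u ^ (p ^ k + 1) = y₂ / y₁`,
an element of `𝔽_p`. Hence `u ^ (2 (p - 1))`, `u ^ (p ^ k - 1)` and `u ^ (p ^ m - 1)` are all `1`,
and since `gcd (2 (p - 1)) (p ^ e - 1) = p - 1` for odd `e` (the quotient `(p ^ e - 1) / (p - 1)`
is a sum of `e` odd powers), `u ^ (p - 1) = 1`, i.e. `u ∈ 𝔽_pˣ`. So the solutions are the
`(a, a t ^ 2, t x, x)` with `a, t ∈ 𝔽_pˣ`, `x ∈ Fˣ`, and the `(a, b, 0, 0)`; in total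
`(p - 1) ^ 2 (p ^ m - 1) + (p - 1) ^ 2 = (p - 1) ^ 2 p ^ m`.
-/

open Finset

theorem Nat.gcd_two_mul_sub_one_pow_sub_one {p e : ℕ} (hp : Odd p) (he : Odd e) :
    Nat.gcd (2 * (p - 1)) (p ^ e - 1) = p - 1 := by
  have hsum : Odd (∑ i ∈ range e, p ^ i) := by
    rwa [odd_sum_iff_odd_card_odd, filter_true_of_mem fun i _ ↦ hp.pow, card_range]
  rw [← geom_sum_mul_of_one_le hp.pos, Nat.gcd_mul_right,
    Nat.Coprime.gcd_eq_one (Nat.coprime_two_left.2 hsum), one_mul]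

theorem pow_sub_one_eq_one_of_pow_eq_one {M : Type*} [Monoid M] {u : M} {p m k : ℕ}
    (hp : Odd p) (he : Odd (m.gcd k)) (h2 : u ^ (2 * (p - 1)) = 1) (hm : u ^ (p ^ m - 1) = 1)
    (hk : u ^ (p ^ k - 1) = 1) : u ^ (p - 1) = 1 := by
  have hgcd : u ^ (p ^ m.gcd k - 1) = 1 := by
    rw [← Nat.pow_sub_one_gcd_pow_sub_one]
    exact pow_gcd_eq_one.2 ⟨hm, hk⟩
  rw [← Nat.gcd_two_mul_sub_one_pow_sub_one hp he]
  exact pow_gcd_eq_one.2 ⟨h2, hgcd⟩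

theorem FiniteField.pow_eq_self_of_sq_of_pow_add_one {F : Type*} [Field F] [Fintype F]
    {p m k : ℕ} (hp : Odd p) (he : Odd (m.gcd k)) (hF : Fintype.card F = p ^ m) {u : F}
    (hsq : (u ^ 2) ^ p = u ^ 2) (hk : u ^ (p ^ k + 1) = u ^ 2) : u ^ p = u := by
  rcases eq_or_ne u 0 with rfl | hu
  · exact zero_pow hp.pos.ne'
  have hu2 : u ^ 2 ≠ 0 := pow_ne_zero 2 hu
  have hp1 : 1 ≤ p := hp.pos
  have h2 : u ^ (2 * (p - 1)) = 1 := by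
    rwa [← pow_mul, show 2 * p = 2 * (p - 1) + 2 by omega, pow_add, mul_eq_right₀ hu2] at hsq
  have hk' : u ^ (p ^ k - 1) = 1 := by
    rwa [show p ^ k + 1 = p ^ k - 1 + 2 by have := Nat.one_le_pow k p hp1; omega, pow_add,
      mul_eq_right₀ hu2] at hk
  have hm : u ^ (p ^ m - 1) = 1 := hF ▸ FiniteField.pow_card_sub_one_eq_one u hu
  have := pow_sub_one_eq_one_of_pow_eq_one hp he h2 hm hk'
  rw [← Nat.sub_add_cancel hp1, pow_succ, this, one_mul]

def solutionSet (p : ℕ) (F : Type*) [CommRing F] [Algebra (ZMod p) F] (k : ℕ) :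
    Set (ZMod p × ZMod p × F × F) :=
  {v | v.1 ≠ 0 ∧ v.2.1 ≠ 0 ∧
    algebraMap (ZMod p) F v.1 * v.2.2.1 ^ 2 - algebraMap (ZMod p) F v.2.1 * v.2.2.2 ^ 2 = 0 ∧
    algebraMap (ZMod p) F v.1 * v.2.2.1 ^ (p ^ k + 1)
      - algebraMap (ZMod p) F v.2.1 * v.2.2.2 ^ (p ^ k + 1) = 0}

def zeroSolution (p : ℕ) (F : Type*) [Zero F] (y : (ZMod p)ˣ × (ZMod p)ˣ) :
    ZMod p × ZMod p × F × F :=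
  (y.1, y.2, 0, 0)

theorem zeroSolution_injective (p : ℕ) (F : Type*) [Zero F] :
    Function.Injective (zeroSolution p F) := by
  rintro ⟨a, b⟩ ⟨a', b'⟩ h
  simp_all [zeroSolution, Units.ext_iff]

def scaledSolution (p : ℕ) (F : Type*) [CommRing F] [Algebra (ZMod p) F]
    (v : (ZMod p)ˣ × (ZMod p)ˣ × Fˣ) : ZMod p × ZMod p × F × F :=
  (v.1, v.1 * v.2.1 ^ 2, algebraMap (ZMod p) F v.2.1 * v.2.2, v.2.2)

theorem disjoint_range_zeroSolution_scaledSolution {p : ℕ} {F : Type*} [Field F]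
    [Algebra (ZMod p) F] :
    Disjoint (Set.range (zeroSolution p F)) (Set.range (scaledSolution p F)) := by
  rw [Set.disjoint_range_iff]
  rintro y ⟨a, t, x⟩ h
  exact x.ne_zero (congrArg (·.2.2.2) h).symm

section PrimeField

variable {p : ℕ} [Fact p.Prime] {F : Type*} [Field F] [Algebra (ZMod p) F]

theorem ZMod.exists_algebraMap_eq_iff_pow_eq_self (z : F) :
    (∃ c : ZMod p, algebraMap (ZMod p) F c = z) ↔ z ^ p = z := by
  have := charP_of_injective_algebraMap (algebraMap (ZMod p) F).injective p
  rw [← Subfield.mem_bot_iff_pow_eq_self F p, ← ZMod.fieldRange_castHom_eq_bot p,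
    RingHom.mem_fieldRange, Subsingleton.elim (ZMod.castHom _ F) (algebraMap _ F)]

theorem ZMod.exists_eq_mul_sq_of_pow_eq [Fintype F] {m k : ℕ} (hp : Odd p) (he : Odd (m.gcd k))
    (hF : Fintype.card F = p ^ m) {y₁ y₂ : ZMod p} {x₁ x₂ : F} (hy₁ : y₁ ≠ 0) (hx₂ : x₂ ≠ 0)
    (h2 : algebraMap (ZMod p) F y₁ * x₁ ^ 2 = algebraMap (ZMod p) F y₂ * x₂ ^ 2)
    (hk : algebraMap (ZMod p) F y₁ * x₁ ^ (p ^ k + 1)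
      = algebraMap (ZMod p) F y₂ * x₂ ^ (p ^ k + 1)) :
    ∃ t : ZMod p, y₂ = y₁ * t ^ 2 ∧ x₁ = algebraMap (ZMod p) F t * x₂ := by
  set φ := algebraMap (ZMod p) F
  have hφy₁ : φ y₁ ≠ 0 := (map_ne_zero φ).2 hy₁
  have hu2 : (x₁ / x₂) ^ 2 = φ (y₂ / y₁) := by
    rw [map_div₀, div_pow, div_eq_div_iff (pow_ne_zero _ hx₂) hφy₁]
    linear_combination h2
  have huk : (x₁ / x₂) ^ (p ^ k + 1) = φ (y₂ / y₁) := by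
    rw [map_div₀, div_pow, div_eq_div_iff (pow_ne_zero _ hx₂) hφy₁]
    linear_combination hk
  obtain ⟨t, ht⟩ := (exists_algebraMap_eq_iff_pow_eq_self _).2 <|
    FiniteField.pow_eq_self_of_sq_of_pow_add_one hp he hF
      (by rw [hu2, ← map_pow, ZMod.pow_card]) (huk.trans hu2.symm)
  refine ⟨t, φ.injective ?_, ?_⟩
  · rw [map_mul, map_pow, ht, hu2, map_div₀]
    field_simp
  · rw [ht, div_mul_cancel₀ _ hx₂]

theorem scaledSolution_injective : Function.Injective (scaledSolution p F) := by
  rintro ⟨a, t, x⟩ ⟨a', t', x'⟩ h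
  simp only [scaledSolution, Prod.mk.injEq, Units.val_inj] at h
  obtain ⟨rfl, -, ht, rfl⟩ := h
  simp [Units.ext_iff, (algebraMap (ZMod p) F).injective (mul_right_cancel₀ x.ne_zero ht)]

theorem solutionSet_eq [Fintype F] {m k : ℕ} (hp : Odd p) (he : Odd (m.gcd k))
    (hF : Fintype.card F = p ^ m) :
    solutionSet p F k = Set.range (zeroSolution p F) ∪ Set.range (scaledSolution p F) := by
  ext ⟨y₁, y₂, x₁, x₂⟩
  simp only [solutionSet, Set.mem_ofPred_eq, Set.mem_union, Set.mem_range, sub_eq_zero]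
  constructor
  · rintro ⟨hy₁, hy₂, h2, hk⟩
    rcases eq_or_ne x₂ 0 with rfl | hx₂
    · left
      have : x₁ = 0 := by simpa [hy₁] using h2
      exact ⟨(Units.mk0 y₁ hy₁, Units.mk0 y₂ hy₂), by simp [zeroSolution, this]⟩
    · right
      obtain ⟨t, rfl, rfl⟩ := ZMod.exists_eq_mul_sq_of_pow_eq hp he hF hy₁ hx₂ h2 hk
      have ht : t ≠ 0 := by rintro rfl; simp at hy₂
      exact ⟨(Units.mk0 y₁ hy₁, Units.mk0 t ht, Units.mk0 x₂ hx₂), by simp [scaledSolution]⟩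
  · rintro (⟨⟨a, b⟩, h⟩ | ⟨⟨a, t, x⟩, h⟩) <;>
      simp only [zeroSolution, scaledSolution, Prod.mk.injEq] at h <;>
      obtain ⟨rfl, rfl, rfl, rfl⟩ := h
    · simp
    · have ht : algebraMap (ZMod p) F t ^ (p ^ k + 1) = algebraMap (ZMod p) F t ^ 2 := by
        rw [← map_pow, ← map_pow, pow_succ, ZMod.pow_card_pow, sq]
      refine ⟨a.ne_zero, by simp, ?_, ?_⟩ <;> simp only [map_mul, map_pow, mul_pow]
      · ring
      · linear_combination (algebraMap (ZMod p) F a * (x : F) ^ (p ^ k + 1)) * ht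

end PrimeField

theorem stmt_11_general (p m k e : ℕ) [Fact p.Prime] (hodd : Odd p)
    (he : e = Nat.gcd m k) (heodd : Odd e)
    (F : Type*) [Field F] [Fintype F] [Algebra (ZMod p) F]
    (hF : Fintype.card F = p ^ m) :
    Nat.card {v : ZMod p × ZMod p × F × F //
        v.1 ≠ 0 ∧ v.2.1 ≠ 0 ∧
        algebraMap (ZMod p) F v.1 * v.2.2.1 ^ 2
          - algebraMap (ZMod p) F v.2.1 * v.2.2.2 ^ 2 = 0 ∧
        algebraMap (ZMod p) F v.1 * v.2.2.1 ^ (p ^ k + 1)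
          - algebraMap (ZMod p) F v.2.1 * v.2.2.2 ^ (p ^ k + 1) = 0}
      = (p - 1) ^ 2 * p ^ m := by
  subst he
  change Nat.card (solutionSet p F k) = _
  rw [Nat.card_coe_set_eq, solutionSet_eq hodd heodd hF,
    Set.ncard_union_eq disjoint_range_zeroSolution_scaledSolution,
    Set.ncard_range_of_injective (zeroSolution_injective p F),
    Set.ncard_range_of_injective scaledSolution_injective]
  simp only [Nat.card_prod, Nat.card_units, Nat.card_zmod]
  rw [Nat.card_eq_fintype_card, hF]
  obtain ⟨n, hn⟩ : ∃ n, p ^ m = n + 1 := Nat.exists_eq_add_one.2 (pow_pos hodd.pos m)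
  rw [hn, Nat.add_sub_cancel]
  ring

/-- Let `p` be an odd prime, `m, k` positive, `e = gcd(m,k)`, `s = m/e`
odd with `s ≥ 3`.  Suppose `k` is even and `e` is odd.  Then the set
`S₁ = {(y₁,y₂,x₁,x₂) ∈ GF(p)^* × GF(p)^* × GF(p^m) × GF(p^m) :
  y₁x₁² - y₂x₂² = 0 and y₁x₁^{p^k+1} - y₂x₂^{p^k+1} = 0}`
has cardinality `(p-1)²·p^m`.  (`GF(p)` is viewed inside `F = GF(p^m)` via the algebra
map from `ZMod p`.) -/
theorem stmt_11 (p m k e s : ℕ) [Fact p.Prime] (hodd : Odd p)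
    (hm : 0 < m) (hk : 0 < k)
    (he : e = Nat.gcd m k) (hs : s = m / e) (hsodd : Odd s) (hs3 : 3 ≤ s)
    (hkeven : Even k) (heodd : Odd e)
    (F : Type*) [Field F] [Fintype F] [Algebra (ZMod p) F]
    (hF : Fintype.card F = p ^ m) :
    Nat.card {v : ZMod p × ZMod p × F × F //
        v.1 ≠ 0 ∧ v.2.1 ≠ 0 ∧
        algebraMap (ZMod p) F v.1 * v.2.2.1 ^ 2
          - algebraMap (ZMod p) F v.2.1 * v.2.2.2 ^ 2 = 0 ∧
        algebraMap (ZMod p) F v.1 * v.2.2.1 ^ (p ^ k + 1)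
          - algebraMap (ZMod p) F v.2.1 * v.2.2.2 ^ (p ^ k + 1) = 0}
      = (p - 1) ^ 2 * p ^ m :=
  stmt_11_general p m k e hodd he heodd F hF
end

section
/- Suppose k is even and e is odd, and let λ be a fixed nonsquare in GF(q). Then the set S₂ = {(y₁,y₂,x₁,x₂) ∈ GF(p)^* × GF(p)^* × GF(p^m) × GF(p^m) : y₁x₁² + λy₂x₂² = 0 and y₁x₁^{p^k+1} − λy₂x₂^{p^k+1} = 0} has cardinality (p−1)². -/
/-!
Only the trivial solutions `x₁ = x₂ = 0` exist. Otherwise dividing the two equations gives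
`t ^ (p ^ k - 1) = -1` for `t = x₁ / x₂`. Then `t ^ 2` has order dividing
`gcd (p ^ k - 1, p ^ m - 1) = p ^ e - 1`, and as `k / e` is even, `2 (p ^ e - 1)` divides
`p ^ k - 1`, forcing `t ^ (p ^ k - 1) = 1 ≠ -1` in odd characteristic.
-/

theorem Nat.two_mul_pow_sub_one_dvd_pow_sub_one {p e k : ℕ} (hp : Odd p) (h : 2 * e ∣ k) :
    2 * (p ^ e - 1) ∣ p ^ k - 1 := by
  have hsq : p ^ (2 * e) - 1 = (p ^ e - 1) * (p ^ e + 1) := by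
    rw [mul_comm 2, pow_mul]
    simpa [mul_comm] using Nat.sq_sub_sq (p ^ e) 1
  calc 2 * (p ^ e - 1) ∣ (p ^ e + 1) * (p ^ e - 1) :=
        mul_dvd_mul_right (even_iff_two_dvd.mp (hp.pow.add_one)) _
    _ = p ^ (2 * e) - 1 := by rw [hsq, mul_comm]
    _ ∣ p ^ k - 1 := Nat.pow_sub_one_dvd_pow_sub_one p h

theorem FiniteField.pow_pow_sub_one_ne_neg_one {F : Type*} [Field F] [Fintype F] {p m k : ℕ}
    (hp : Odd p) (hF : Fintype.card F = p ^ m) (hk : 2 * m.gcd k ∣ k) (t : F) :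
    t ^ (p ^ k - 1) ≠ -1 := by
  have hchar : ringChar F ≠ 2 := by
    rw [Ne, FiniteField.even_card_iff_char_two, hF, ← Nat.even_iff, Nat.not_even_iff_odd]
    exact hp.pow
  have hneg : (-1 : F) ≠ 1 := Ring.neg_one_ne_one_of_char_ne_two hchar
  intro ht
  have ht0 : t ≠ 0 := by
    rintro rfl
    rw [zero_pow_eq] at ht
    split_ifs at ht
    · exact hneg ht.symm
    · exact one_ne_zero (neg_eq_zero.mp ht.symm)
  have hsq_k : (t ^ 2) ^ (p ^ k - 1) = 1 := by rw [← pow_mul, mul_comm, pow_mul, ht]; norm_num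
  have hsq_m : (t ^ 2) ^ (p ^ m - 1) = 1 :=
    hF ▸ FiniteField.pow_card_sub_one_eq_one _ (pow_ne_zero 2 ht0)
  have hsq_gcd : t ^ (2 * (p ^ m.gcd k - 1)) = 1 := by
    rw [pow_mul, ← Nat.pow_sub_one_gcd_pow_sub_one]
    exact pow_gcd_eq_one.mpr ⟨hsq_m, hsq_k⟩
  obtain ⟨c, hc⟩ := Nat.two_mul_pow_sub_one_dvd_pow_sub_one hp hk
  exact hneg (by rw [← ht, hc, pow_mul, hsq_gcd, one_pow])

theorem eq_zero_and_eq_zero_of_forall_pow_ne_neg_one {K : Type*} [Field K] {a b x y : K} {n : ℕ}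
    (ha : a ≠ 0) (hb : b ≠ 0) (hn : ∀ t : K, t ^ n ≠ -1)
    (h₁ : a * x ^ 2 + b * y ^ 2 = 0) (h₂ : a * x ^ (n + 2) - b * y ^ (n + 2) = 0) :
    x = 0 ∧ y = 0 := by
  by_cases hy : y = 0
  · subst hy
    simpa [ha] using h₁
  -- dividing the second equation by the first gives `x ^ n = - y ^ n`
  have hby : b * y ^ 2 ≠ 0 := mul_ne_zero hb (pow_ne_zero 2 hy)
  have hxy : x ^ n = -y ^ n := by
    refine mul_left_cancel₀ hby ?_
    linear_combination x ^ n * h₁ - h₂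
  exact absurd (by rw [div_pow, hxy, neg_div, div_self (pow_ne_zero n hy)]) (hn (x / y))

theorem stmt_12_general (p m k e : ℕ) [Fact p.Prime] (hodd : Odd p)
    (he : e = Nat.gcd m k)
    (hkeven : Even k) (heodd : Odd e)
    (F : Type*) [Field F] [Fintype F] [Algebra (ZMod p) F]
    (hF : Fintype.card F = p ^ m)
    (lam : F) (hlam0 : lam ≠ 0) :
    Nat.card {v : ZMod p × ZMod p × F × F //
        v.1 ≠ 0 ∧ v.2.1 ≠ 0 ∧
        algebraMap (ZMod p) F v.1 * v.2.2.1 ^ 2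
          + lam * (algebraMap (ZMod p) F v.2.1 * v.2.2.2 ^ 2) = 0 ∧
        algebraMap (ZMod p) F v.1 * v.2.2.1 ^ (p ^ k + 1)
          - lam * (algebraMap (ZMod p) F v.2.1 * v.2.2.2 ^ (p ^ k + 1)) = 0}
      = (p - 1) ^ 2 := by
  subst he
  have hk2 : 2 * m.gcd k ∣ k :=
    (Nat.coprime_two_left.mpr heodd).mul_dvd_of_dvd_of_dvd (even_iff_two_dvd.mp hkeven)
      (Nat.gcd_dvd_right m k)
  have hexp : p ^ k + 1 = (p ^ k - 1) + 2 := by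
    have := Nat.one_le_pow k p (Fact.out : p.Prime).pos
    omega
  rw [Nat.card_congr (β := {y : ZMod p // y ≠ 0} × {y : ZMod p // y ≠ 0})
      ⟨fun v => (⟨v.1.1, v.2.1⟩, ⟨v.1.2.1, v.2.2.1⟩),
        fun y => ⟨(y.1, y.2, 0, 0), y.1.2, y.2.2, by simp, by simp⟩, ?_, fun _ => rfl⟩,
    Nat.card_prod, ← Nat.card_congr unitsEquivNeZero, Nat.card_eq_fintype_card,
    ZMod.card_units, sq]
  rintro ⟨⟨y₁, y₂, x₁, x₂⟩, hy₁, hy₂, h₁, h₂⟩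
  simp only [← mul_assoc, hexp] at h₁ h₂
  obtain ⟨rfl, rfl⟩ := eq_zero_and_eq_zero_of_forall_pow_ne_neg_one ((map_ne_zero _).mpr hy₁)
    (mul_ne_zero hlam0 ((map_ne_zero _).mpr hy₂))
    (FiniteField.pow_pow_sub_one_ne_neg_one hodd hF hk2) h₁ h₂
  rfl

/-- Let `p` be an odd prime, `m, k` positive, `e = gcd(m,k)`, `s = m/e`
odd with `s ≥ 3`, `q = p^e`.  Suppose `k` is even and `e` is odd, and let `λ` be a fixed
nonsquare in `GF(q) ⊆ F = GF(p^m)` (the subfield of solutions of `x^{p^e} = x`).  Then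
the set
`S₂ = {(y₁,y₂,x₁,x₂) ∈ GF(p)^* × GF(p)^* × GF(p^m) × GF(p^m) :
  y₁x₁² + λy₂x₂² = 0 and y₁x₁^{p^k+1} - λy₂x₂^{p^k+1} = 0}`
has cardinality `(p-1)²`. -/
theorem stmt_12 (p m k e s : ℕ) [Fact p.Prime] (hodd : Odd p)
    (hm : 0 < m) (hk : 0 < k)
    (he : e = Nat.gcd m k) (hs : s = m / e) (hsodd : Odd s) (hs3 : 3 ≤ s)
    (hkeven : Even k) (heodd : Odd e)
    (F : Type*) [Field F] [Fintype F] [Algebra (ZMod p) F]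
    (hF : Fintype.card F = p ^ m)
    (lam : F) (hlam0 : lam ≠ 0) (hlamq : lam ^ (p ^ e) = lam)
    (hlamns : ¬ ∃ x : F, x ^ (p ^ e) = x ∧ x ^ 2 = lam) :
    Nat.card {v : ZMod p × ZMod p × F × F //
        v.1 ≠ 0 ∧ v.2.1 ≠ 0 ∧
        algebraMap (ZMod p) F v.1 * v.2.2.1 ^ 2
          + lam * (algebraMap (ZMod p) F v.2.1 * v.2.2.2 ^ 2) = 0 ∧
        algebraMap (ZMod p) F v.1 * v.2.2.1 ^ (p ^ k + 1)
          - lam * (algebraMap (ZMod p) F v.2.1 * v.2.2.2 ^ (p ^ k + 1)) = 0}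
      = (p - 1) ^ 2 :=
  stmt_12_general p m k e hodd he hkeven heodd F hF lam hlam0
end

section
/- Let k be an even positive integer and m an odd positive integer. Then gcd( (3^k + 1)/2, 3^m − 1 ) = 1. -/
/-! If `d` divides both `x ^ n + 1` and `x ^ m - 1` with `m` odd, then modulo `d` we have
`x ^ (n * m) ≡ -1` and `x ^ (n * m) ≡ 1`, so `d ∣ 2`. For `x = 3` and `n = k` even,
`3 ^ k ≡ 1 [MOD 4]`, so `(3 ^ k + 1) / 2` is odd and the common divisor is `1`. -/

theorem dvd_two_of_dvd_pow_add_one_of_dvd_pow_sub_one {R : Type*} [CommRing R] {d x : R}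
    {n m : ℕ} (hm : Odd m) (hdn : d ∣ x ^ n + 1) (hdm : d ∣ x ^ m - 1) : d ∣ 2 := by
  have h_add : d ∣ x ^ (n * m) + 1 := by
    simpa only [one_pow, pow_mul] using hdn.trans (hm.add_dvd_pow_add_pow (x ^ n) 1)
  have h_sub : d ∣ x ^ (n * m) - 1 := by
    simpa only [one_pow, ← pow_mul, mul_comm m] using hdm.trans (sub_dvd_pow_sub_pow (x ^ m) 1 n)
  simpa only [add_sub_sub_cancel, one_add_one_eq_two] using dvd_sub h_add h_sub

theorem Nat.two_dvd_pow_add_one_of_odd {a : ℕ} (ha : Odd a) (k : ℕ) : 2 ∣ a ^ k + 1 :=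
  (ha.pow.add_odd odd_one).two_dvd

theorem Nat.odd_pow_add_one_div_two_of_even {a k : ℕ} (ha : Odd a) (hk : Even k) :
    Odd ((a ^ k + 1) / 2) := by
  obtain ⟨j, rfl⟩ := hk
  have h4 : (a ^ j) ^ 2 % 4 = 1 := by
    exact_mod_cast Int.sq_mod_four_eq_one_of_odd (x := (a ^ j : ℕ)) (by exact_mod_cast ha.pow)
  rw [← two_mul, pow_mul', Nat.odd_iff]
  omega

theorem stmt_19_general (k m : ℕ) (hkeven : Even k) (hmodd : Odd m) :
    Nat.gcd ((3 ^ k + 1) / 2) (3 ^ m - 1) = 1 := by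
  set d := Nat.gcd ((3 ^ k + 1) / 2) (3 ^ m - 1)
  have hd_odd : Odd d :=
    (Nat.odd_pow_add_one_div_two_of_even (by decide) hkeven).of_dvd_nat (Nat.gcd_dvd_left _ _)
  have hd_left : (d : ℤ) ∣ 3 ^ k + 1 := by
    exact_mod_cast (Nat.gcd_dvd_left _ _).trans
      (Nat.div_dvd_of_dvd (Nat.two_dvd_pow_add_one_of_odd (by decide) k))
  have hd_right : (d : ℤ) ∣ 3 ^ m - 1 := by
    have := Int.natCast_dvd_natCast.mpr (Nat.gcd_dvd_right ((3 ^ k + 1) / 2) (3 ^ m - 1))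
    rwa [Nat.cast_sub (Nat.one_le_pow _ _ (by norm_num)), Nat.cast_pow, Nat.cast_one] at this
  have hd_two : d ∣ 2 := by
    exact_mod_cast dvd_two_of_dvd_pow_add_one_of_dvd_pow_sub_one hmodd hd_left hd_right
  exact hd_odd.coprime_two_right.eq_one_of_dvd hd_two

/-- Let `k` be an even positive integer and `m` an odd positive
integer.  Then `gcd((3^k + 1)/2, 3^m - 1) = 1`. -/
theorem stmt_19 (k m : ℕ) (hk : 0 < k) (hkeven : Even k)
    (hm : 0 < m) (hmodd : Odd m) :
    Nat.gcd ((3 ^ k + 1) / 2) (3 ^ m - 1) = 1 :=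
  stmt_19_general k m hkeven hmodd
end
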